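/- Assume DᵀD = I_d and suppose that for every k ≥ 0 the ADMM optimality conditions hold: (i) for all z ∈ Z, θ1(z) − θ1(z^{k+1}) + ⟨z − z^{k+1}, λ^k − β(Dx^k − z^{k+1})⟩ ≥ 0; (ii) for all x ∈ X, θ2(x) − θ2(x^{k+1}) + ⟨x − x^{k+1}, −Dᵀλ^k + βDᵀ(Dx^{k+1} − z^{k+1})⟩ ≥ 0; (iii) λ^{k+1} = λ^k − β(Dx^{k+1} − z^{k+1}); together with (iv) for all x ∈ X, θ2(x) − θ2(x^0) + ⟨x − x^0, −Dᵀλ^0⟩ ≥ 0. Suppose (z*, x*, λ*) ∈ Z × X × R^n satisfies the saddle-point conditions: for all z ∈ Z, θ1(z) − θ1(z*) + ⟨z − z*, λ*⟩ ≥ 0; for all x ∈ X, θ2(x) − θ2(x*) + ⟨x − x*, −Dᵀλ*⟩ ≥ 0; and Dx* = z*. Then, with ‖v‖_H² := (1/β)‖λ‖₂² + β‖x‖₂² for v = (λ, x), the series ∑_{k=0}^∞ ‖v^k − v^{k+1}‖_H² converges and ∑_{k=0}^∞ ‖v^k − v^{k+1}‖_H² ≤ ‖v^0 − v*‖_H²;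 consequently ‖v^k − v^{k+1}‖_H → 0 as k → ∞. -/

import Mathlib

open scoped RealInnerProductSpace

/-- Matrix-vector multiplication, landing in Euclidean space. -/
noncomputable def mulv {n d : ℕ} (A : Matrix (Fin n) (Fin d) ℝ)
    (x : EuclideanSpace ℝ (Fin d)) : EuclideanSpace ℝ (Fin n) := WithLp.toLp 2 (A.mulVec x)

/-- `θ₁(z) = ‖z‖₁`, the sum of absolute values of the entries of `z`. -/
noncomputable def theta1 {n : ℕ} (z : EuclideanSpace ℝ (Fin n)) : ℝ := ∑ i, |z i|

/-- `θ₂(x) = (α/2)‖y − Mx‖₂²`. -/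
noncomputable def theta2 {m d : ℕ} (M : Matrix (Fin m) (Fin d) ℝ)
    (y : EuclideanSpace ℝ (Fin m)) (α : ℝ) (x : EuclideanSpace ℝ (Fin d)) : ℝ :=
  α / 2 * ‖y - mulv M x‖ ^ 2

lemma mulv_sub {n d : ℕ} (A : Matrix (Fin n) (Fin d) ℝ) (u v : EuclideanSpace ℝ (Fin d)) :
    mulv A (u - v) = mulv A u - mulv A v := by
  ext i; simp [mulv, Matrix.mulVec, dotProduct, PiLp.sub_apply, mul_sub,
    Finset.sum_sub_distrib]

lemma mulv_smul {n d : ℕ} (A : Matrix (Fin n) (Fin d) ℝ) (c : ℝ) (u : EuclideanSpace ℝ (Fin d)) :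
    mulv A (c • u) = c • mulv A u := by
  ext i; simp [mulv, Matrix.mulVec, dotProduct, PiLp.smul_apply, mul_comm,
    mul_left_comm, Finset.mul_sum]

lemma inner_eq_dot {n : ℕ} (x y : EuclideanSpace ℝ (Fin n)) :
    ⟪x, y⟫ = dotProduct (x : Fin n → ℝ) y := by
  simp [PiLp.inner_apply, dotProduct, RCLike.inner_apply, mul_comm]

lemma inner_mulv {n d : ℕ} (A : Matrix (Fin n) (Fin d) ℝ) (u : EuclideanSpace ℝ (Fin d))
    (w : EuclideanSpace ℝ (Fin n)) : ⟪mulv A u, w⟫ = ⟪u, mulv A.transpose w⟫ := by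
  rw [inner_eq_dot, inner_eq_dot]
  show dotProduct (A.mulVec u) w = dotProduct u (A.transpose.mulVec w)
  rw [Matrix.dotProduct_mulVec, Matrix.vecMul_transpose]

lemma inner_mulv_mulv {n d : ℕ} {D : Matrix (Fin n) (Fin d) ℝ} (hD : D.transpose * D = 1)
    (u w : EuclideanSpace ℝ (Fin d)) : ⟪mulv D u, mulv D w⟫ = ⟪u, w⟫ := by
  rw [inner_mulv]
  congr 1
  show WithLp.toLp 2 (D.transpose.mulVec (D.mulVec w)) = w
  rw [Matrix.mulVec_mulVec, hD, Matrix.one_mulVec]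

/-- Summability of the successive `H`-norm differences of the ADMM iterates:
`∑_{k=0}^∞ ‖v^k − v^{k+1}‖_H² ≤ ‖v^0 − v*‖_H²` and `‖v^k − v^{k+1}‖_H → 0`. -/
theorem stmt_10 {n d m : ℕ} (D : Matrix (Fin n) (Fin d) ℝ) (M : Matrix (Fin m) (Fin d) ℝ)
    (y : EuclideanSpace ℝ (Fin m)) (α β : ℝ) (hα : 0 < α) (hβ : 0 < β)
    (Z : Set (EuclideanSpace ℝ (Fin n))) (X : Set (EuclideanSpace ℝ (Fin d)))
    (hZ : Convex ℝ Z) (hX : Convex ℝ X)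
    (hnd : d ≤ n) (hD : D.transpose * D = 1)
    (zseq : ℕ → EuclideanSpace ℝ (Fin n)) (xseq : ℕ → EuclideanSpace ℝ (Fin d))
    (lseq : ℕ → EuclideanSpace ℝ (Fin n))
    (hzZ : ∀ k, zseq k ∈ Z) (hxX : ∀ k, xseq k ∈ X)
    (h1 : ∀ k, ∀ z ∈ Z, theta1 z - theta1 (zseq (k + 1)) +
      ⟪z - zseq (k + 1), lseq k - β • (mulv D (xseq k) - zseq (k + 1))⟫ ≥ 0)
    (h2 : ∀ k, ∀ x ∈ X, theta2 M y α x - theta2 M y α (xseq (k + 1)) +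
      ⟪x - xseq (k + 1), -(mulv D.transpose (lseq k)) +
        β • mulv D.transpose (mulv D (xseq (k + 1)) - zseq (k + 1))⟫ ≥ 0)
    (h3 : ∀ k, lseq (k + 1) = lseq k - β • (mulv D (xseq (k + 1)) - zseq (k + 1)))
    (h4 : ∀ x ∈ X, theta2 M y α x - theta2 M y α (xseq 0) +
      ⟪x - xseq 0, -(mulv D.transpose (lseq 0))⟫ ≥ 0)
    (zs : EuclideanSpace ℝ (Fin n)) (xs : EuclideanSpace ℝ (Fin d))
    (ls : EuclideanSpace ℝ (Fin n)) (hzs : zs ∈ Z) (hxs : xs ∈ X)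
    (hs1 : ∀ z ∈ Z, theta1 z - theta1 zs + ⟪z - zs, ls⟫ ≥ 0)
    (hs2 : ∀ x ∈ X, theta2 M y α x - theta2 M y α xs + ⟪x - xs, -(mulv D.transpose ls)⟫ ≥ 0)
    (hs3 : mulv D xs = zs) :
    Summable (fun k => (1 / β) * ‖lseq k - lseq (k + 1)‖ ^ 2 +
        β * ‖xseq k - xseq (k + 1)‖ ^ 2) ∧
      (∑' k : ℕ, ((1 / β) * ‖lseq k - lseq (k + 1)‖ ^ 2 +
          β * ‖xseq k - xseq (k + 1)‖ ^ 2)) ≤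
        (1 / β) * ‖lseq 0 - ls‖ ^ 2 + β * ‖xseq 0 - xs‖ ^ 2 ∧
      Filter.Tendsto (fun k => Real.sqrt ((1 / β) * ‖lseq k - lseq (k + 1)‖ ^ 2 +
          β * ‖xseq k - xseq (k + 1)‖ ^ 2)) Filter.atTop (nhds 0) := by
  classical
  have hβ0 : β ≠ 0 := ne_of_gt hβ
  -- x-optimality at every iterate
  have q : ∀ k, ∀ x ∈ X, theta2 M y α x - theta2 M y α (xseq k) +
      ⟪x - xseq k, -(mulv D.transpose (lseq k))⟫ ≥ 0 := by
    intro k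
    cases k with
    | zero => exact h4
    | succ k =>
      intro x hx
      have h := h2 k x hx
      have hv : -(mulv D.transpose (lseq k)) +
          β • mulv D.transpose (mulv D (xseq (k + 1)) - zseq (k + 1))
          = -(mulv D.transpose (lseq (k + 1))) := by
        rw [h3 k]; simp only [mulv_sub, mulv_smul]; module
      rwa [hv] at h
  -- cross inequality
  have cross : ∀ k, ⟪lseq k - lseq (k + 1), mulv D (xseq k - xseq (k + 1))⟫ ≥ 0 := by
    intro k
    have hq1 := q k (xseq (k + 1)) (hxX (k + 1))
    have hq2 := q (k + 1) (xseq k) (hxX k)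
    have e : ⟪lseq k - lseq (k + 1), mulv D (xseq k - xseq (k + 1))⟫
        = ⟪xseq k - xseq (k + 1), mulv D.transpose (lseq k - lseq (k + 1))⟫ := by
      rw [real_inner_comm, inner_mulv]
    rw [e, mulv_sub]
    simp only [inner_sub_left, inner_sub_right, inner_neg_right] at hq1 hq2 ⊢
    linarith
  set t : ℕ → ℝ := fun k => (1 / β) * ‖lseq k - lseq (k + 1)‖ ^ 2 +
      β * ‖xseq k - xseq (k + 1)‖ ^ 2 with ht
  set Φ : ℕ → ℝ := fun k => (1 / β) * ‖lseq k - ls‖ ^ 2 + β * ‖xseq k - xs‖ ^ 2 with hΦ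
  clear_value t Φ
  have key : ∀ k, t k ≤ Φ k - Φ (k + 1) := by
    intro k
    have h3k := h3 k
    have hz : mulv D (xseq (k + 1)) - zseq (k + 1) = β⁻¹ • (lseq k - lseq (k + 1)) := by
      rw [h3k]; match_scalars <;> field_simp <;> ring
    have hvecA : (lseq k - β • (mulv D (xseq k) - zseq (k + 1))) - ls
        = (lseq (k + 1) - ls) + β • mulv D (xseq (k + 1) - xseq k) := by
      rw [h3k, mulv_sub]; module
    have hvecZ : zs - zseq (k + 1)
        = mulv D (xs - xseq (k + 1)) + β⁻¹ • (lseq k - lseq (k + 1)) := by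
      rw [← hz, ← hs3, mulv_sub]
      abel
    have hA1 := h1 k zs hzs
    have hA2 := hs1 (zseq (k + 1)) (hzZ (k + 1))
    have hA' : ⟪zs - zseq (k + 1), (lseq k - β • (mulv D (xseq k) - zseq (k + 1))) - ls⟫ ≥ 0 := by
      rw [inner_sub_right]
      have e : ⟪zseq (k + 1) - zs, ls⟫ = -⟪zs - zseq (k + 1), ls⟫ := by
        rw [← inner_neg_left]; congr 1; abel
      linarith
    rw [hvecA, hvecZ] at hA'
    simp only [inner_add_left, inner_add_right, real_inner_smul_left,
      real_inner_smul_right] at hA'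
    rw [inner_mulv_mulv hD] at hA'
    have hbb : ∀ r : ℝ, β * (β⁻¹ * r) = r := fun r => by field_simp
    rw [hbb] at hA'
    have hA4 : ⟪lseq k - lseq (k + 1), mulv D (xseq (k + 1) - xseq k)⟫
        = -⟪lseq k - lseq (k + 1), mulv D (xseq k - xseq (k + 1))⟫ := by
      rw [← inner_neg_right]; congr 1; rw [mulv_sub, mulv_sub]; abel
    rw [hA4] at hA'
    have hXe : ⟪xs - xseq (k + 1), xseq (k + 1) - xseq k⟫
        = ⟪xseq k - xseq (k + 1), xseq (k + 1) - xs⟫ := by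
      rw [real_inner_comm, ← inner_neg_neg]
      congr 1 <;> abel
    rw [hXe] at hA'
    have hB1 := q (k + 1) xs hxs
    have hB2 := hs2 (xseq (k + 1)) (hxX (k + 1))
    have hB' : ⟪mulv D (xs - xseq (k + 1)), lseq (k + 1) - ls⟫ ≤ 0 := by
      have e1 : ⟪xs - xseq (k + 1), -(mulv D.transpose (lseq (k + 1)))⟫
          = -⟪mulv D (xs - xseq (k + 1)), lseq (k + 1)⟫ := by
        rw [inner_neg_right, inner_mulv]
      have e2 : ⟪xseq (k + 1) - xs, -(mulv D.transpose ls)⟫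
          = ⟪mulv D (xs - xseq (k + 1)), ls⟫ := by
        rw [inner_neg_right, ← inner_mulv, ← inner_neg_left]
        congr 1
        rw [mulv_sub, mulv_sub]; abel
      rw [inner_sub_right]
      linarith
    have n1 : ‖lseq k - ls‖ ^ 2 = ‖lseq k - lseq (k + 1)‖ ^ 2
        + 2 * ⟪lseq k - lseq (k + 1), lseq (k + 1) - ls⟫ + ‖lseq (k + 1) - ls‖ ^ 2 := by
      have h := norm_add_sq_real (lseq k - lseq (k + 1)) (lseq (k + 1) - ls)
      rw [show lseq k - lseq (k + 1) + (lseq (k + 1) - ls) = lseq k - ls by abel] at h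
      linarith
    have n2 : ‖xseq k - xs‖ ^ 2 = ‖xseq k - xseq (k + 1)‖ ^ 2
        + 2 * ⟪xseq k - xseq (k + 1), xseq (k + 1) - xs⟫ + ‖xseq (k + 1) - xs‖ ^ 2 := by
      have h := norm_add_sq_real (xseq k - xseq (k + 1)) (xseq (k + 1) - xs)
      rw [show xseq k - xseq (k + 1) + (xseq (k + 1) - xs) = xseq k - xs by abel] at h
      linarith
    have expand : Φ k - Φ (k + 1) - t k
        = 2 * (β⁻¹ * ⟪lseq k - lseq (k + 1), lseq (k + 1) - ls⟫
          + β * ⟪xseq k - xseq (k + 1), xseq (k + 1) - xs⟫) := by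
      simp only [ht, hΦ]
      rw [n1, n2]; ring
    have P : β⁻¹ * ⟪lseq k - lseq (k + 1), lseq (k + 1) - ls⟫
        + β * ⟪xseq k - xseq (k + 1), xseq (k + 1) - xs⟫ ≥ 0 := by
      linarith [cross k, hB', hA']
    linarith [expand, P]
  have t_nonneg : ∀ k, 0 ≤ t k := by
    intro k
    simp only [ht]
    positivity
  have Φ_nonneg : ∀ k, 0 ≤ Φ k := by
    intro k
    simp only [hΦ]
    positivity
  have hpartial : ∀ N, ∑ k ∈ Finset.range N, t k ≤ Φ 0 := by
    intro N
    have htel : ∑ k ∈ Finset.range N, (Φ k - Φ (k + 1)) = Φ 0 - Φ N :=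
      Finset.sum_range_sub' Φ N
    have h1' : ∑ k ∈ Finset.range N, t k ≤ ∑ k ∈ Finset.range N, (Φ k - Φ (k + 1)) :=
      Finset.sum_le_sum fun i _ => key i
    have := Φ_nonneg N
    linarith
  have hsum : Summable t := summable_of_sum_range_le t_nonneg hpartial
  refine ⟨hsum, ?_, ?_⟩
  · have hb := Real.tsum_le_of_sum_range_le t_nonneg hpartial
    simpa only [hΦ] using hb
  · have h0 : Filter.Tendsto t Filter.atTop (nhds 0) := hsum.tendsto_atTop_zero
    have hc := (Real.continuous_sqrt.tendsto 0).comp h0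
    rw [Real.sqrt_zero] at hc
    simpa only [Function.comp_def, ht] using hc
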